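/- arXiv:1505.01151 — 6 statements merged into one kernel-verified Lean document; each statement's English description precedes it below -/
import Mathlib

section
/- Hahn-Banach extension theorem for order unit spaces: if $(V,C,u)$ is an order unit space over an ordered field $\mathbb{F} \subseteq \mathbb{R}$, $U \subseteq V$ is a subspace containing $u$, and $\sigma : U \to \mathbb{R}$ is a probability measure on $(U, C \cap U, u)$, then there exists a probability measure $\rho : V \to \mathbb{R}$ with $\rho|_U = \sigma$. -/
/-- An order unit space `(V, C, u)` over an ordered field `𝔽`. -/
structure OUS (𝔽 V : Type*) [Field 𝔽] [LinearOrder 𝔽] [IsStrictOrderedRing 𝔽] [AddCommGroup V] [Module 𝔽 V] where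
  C : Set V
  u : V
  add_mem : ∀ ⦃a⦄, a ∈ C → ∀ ⦃b⦄, b ∈ C → a + b ∈ C
  smul_mem : ∀ l : 𝔽, 0 ≤ l → ∀ ⦃a⦄, a ∈ C → l • a ∈ C
  u_mem : u ∈ C
  neg_u_not_mem : -u ∉ C
  order_unit : ∀ a : V, ∃ l : 𝔽, l • u + a ∈ C

/-!
The positive cone `C` is a pointed cone, and since `u` is an order unit every subspace `U ∋ u`
satisfies `U + C = V`. Hence M. Riesz's extension theorem applies. Its proof (Zorn's lemma, plus a
one-dimensional extension step whose new value is chosen between a supremum and an infimum) uses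
only that the target `ℝ` is Dedekind complete and an ordered module over the scalar field, so it
goes through verbatim over any ordered field of scalars.
-/

open Set Submodule

instance Subfield.posSMulMono {K : Type*} [Field K] [LinearOrder K] [IsStrictOrderedRing K]
    (F : Subfield K) : PosSMulMono F K :=
  ⟨fun _ hr _ _ hab => mul_le_mul_of_nonneg_left hab hr⟩

theorem LinearPMap.sSup_nonneg_on {R E W : Type*} [Ring R] [AddCommGroup E] [Module R E]
    [AddCommGroup W] [Preorder W] [Module R W] {s : Set E} {c : Set (E →ₗ.[R] W)}
    (hc : DirectedOn (· ≤ ·) c) (hne : c.Nonempty)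
    (nonneg : ∀ f ∈ c, ∀ x : f.domain, (x : E) ∈ s → 0 ≤ f x) :
    ∀ x : (LinearPMap.sSup c hc).domain, (x : E) ∈ s → 0 ≤ LinearPMap.sSup c hc x := by
  rintro ⟨x, hx⟩ hxs
  have hdir : DirectedOn (· ≤ ·) (LinearPMap.domain '' c) :=
    directedOn_image.2 (hc.mono LinearPMap.domain_mono.monotone)
  obtain ⟨_, ⟨f, hfc, rfl⟩, hfx⟩ := (mem_sSup_of_directed (hne.image _) hdir).1 hx
  rw [← (LinearPMap.le_sSup hc hfc).2 (x := ⟨x, hfx⟩) rfl]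
  exact nonneg f hfc ⟨x, hfx⟩ hxs

section

variable {𝕜 E W : Type*} [Field 𝕜] [LinearOrder 𝕜] [IsStrictOrderedRing 𝕜]
  [AddCommGroup E] [Module 𝕜 E]
  [AddCommGroup W] [ConditionallyCompleteLattice W] [IsOrderedAddMonoid W] [Module 𝕜 W]
  (s : PointedCone 𝕜 E)

namespace RieszExtension

theorem exists_separating_value (f : E →ₗ.[𝕜] W)
    (nonneg : ∀ x : f.domain, (x : E) ∈ s → 0 ≤ f x)
    (dense : ∀ y, ∃ x : f.domain, (x : E) + y ∈ s) (y : E) :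
    ∃ c, (∀ x : f.domain, -(x : E) - y ∈ s → f x ≤ c) ∧
      ∀ x : f.domain, (x : E) + y ∈ s → c ≤ f x := by
  suffices (upperBounds (f '' {x | -(x : E) - y ∈ s}) ∩
      lowerBounds (f '' {x | (x : E) + y ∈ s})).Nonempty by
    obtain ⟨c, hc_ub, hc_lb⟩ := this
    exact ⟨c, fun x hx => hc_ub ⟨x, hx, rfl⟩, fun x hx => hc_lb ⟨x, hx, rfl⟩⟩
  refine exists_between_of_forall_le (Nonempty.image f ?_) (Nonempty.image f (dense y)) ?_
  · obtain ⟨x, hx⟩ := dense (-y)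
    exact ⟨-x, by simpa [sub_eq_add_neg] using hx⟩
  rintro _ ⟨xn, hxn, rfl⟩ _ ⟨xp, hxp, rfl⟩
  have hsum : ((xp - xn : f.domain) : E) ∈ s := by
    simpa [sub_eq_add_neg, add_assoc] using s.add_mem hxp hxn
  simpa [f.map_sub, sub_nonneg] using nonneg _ hsum

variable [PosSMulMono 𝕜 W]

theorem exists_gt_of_domain_ne_top (f : E →ₗ.[𝕜] W)
    (nonneg : ∀ x : f.domain, (x : E) ∈ s → 0 ≤ f x)
    (dense : ∀ y, ∃ x : f.domain, (x : E) + y ∈ s) (hdom : f.domain ≠ ⊤) :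
    ∃ g, f < g ∧ ∀ x : g.domain, (x : E) ∈ s → 0 ≤ g x := by
  obtain ⟨y, -, hy⟩ : ∃ y ∈ ⊤, y ∉ f.domain := SetLike.exists_of_lt (lt_top_iff_ne_top.2 hdom)
  obtain ⟨c, le_c, c_le⟩ := exists_separating_value s f nonneg dense y
  -- Extend by the value `c` at `-y`; the two bounds on `c` are nonnegativity on the two
  -- half-lines `r < 0` and `r > 0` of the new direction.
  refine ⟨f.supSpanSingleton y (-c) hy, ?_, ?_⟩
  · refine lt_iff_le_not_ge.2 ⟨f.left_le_sup _ _, fun H => hy ?_⟩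
    have := LinearPMap.domain_mono.monotone H
    rw [LinearPMap.domain_supSpanSingleton, sup_le_iff, span_le, singleton_subset_iff] at this
    exact this.2
  rintro ⟨z, hz⟩ hzs
  obtain ⟨x, hx, y', hy', rfl⟩ := mem_sup.1 hz
  obtain ⟨r, rfl⟩ := mem_span_singleton.1 hy'
  rw [LinearPMap.supSpanSingleton_apply_mk _ _ _ _ _ hx, smul_neg, ← sub_eq_add_neg, sub_nonneg]
  rcases lt_trichotomy r 0 with hr | rfl | hr
  · have hmem : -(r⁻¹ • x) - y ∈ s := by
      rwa [← s.smul_mem_iff (neg_pos.2 hr), smul_sub, smul_neg, neg_smul, neg_neg, smul_smul,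
        mul_inv_cancel₀ hr.ne, one_smul, sub_eq_add_neg, neg_smul, neg_neg]
    have := le_c (r⁻¹ • ⟨x, hx⟩) hmem
    rwa [f.map_smul, inv_smul_le_iff_of_neg hr] at this
  · simpa using nonneg ⟨x, hx⟩ (by simpa using hzs)
  · have hmem : r⁻¹ • x + y ∈ s := by
      rwa [← s.smul_mem_iff hr, smul_add, smul_smul, mul_inv_cancel₀ hr.ne', one_smul]
    have := c_le (r⁻¹ • ⟨x, hx⟩) hmem
    rwa [f.map_smul, le_inv_smul_iff_of_pos hr] at this

theorem exists_domain_eq_top (f : E →ₗ.[𝕜] W)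
    (nonneg : ∀ x : f.domain, (x : E) ∈ s → 0 ≤ f x)
    (dense : ∀ y, ∃ x : f.domain, (x : E) + y ∈ s) :
    ∃ g ≥ f, g.domain = ⊤ ∧ ∀ x : g.domain, (x : E) ∈ s → 0 ≤ g x := by
  set S := {g : E →ₗ.[𝕜] W | ∀ x : g.domain, (x : E) ∈ s → 0 ≤ g x}
  have chain_bdd : ∀ c ⊆ S, IsChain (· ≤ ·) c → ∀ g ∈ c, ∃ ub ∈ S, ∀ h ∈ c, h ≤ ub :=
    fun c hcS hc _ hg =>
      ⟨_, LinearPMap.sSup_nonneg_on hc.directedOn ⟨_, hg⟩ hcS, fun _ ↦ LinearPMap.le_sSup _⟩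
  obtain ⟨g, hfg, hgS, hg_max⟩ := zorn_le_nonempty₀ S chain_bdd f nonneg
  refine ⟨g, hfg, ?_, hgS⟩
  by_contra hdom
  have g_dense : ∀ y, ∃ x : g.domain, (x : E) + y ∈ s := fun y ↦
    let ⟨x, hx⟩ := dense y
    ⟨Submodule.inclusion hfg.1 x, hx⟩
  obtain ⟨h, hgh, hhS⟩ := exists_gt_of_domain_ne_top s g hgS g_dense hdom
  exact hgh.not_ge (hg_max hhS hgh.le)

end RieszExtension

theorem riesz_extension_of_conditionallyCompleteLattice [PosSMulMono 𝕜 W] (f : E →ₗ.[𝕜] W)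
    (nonneg : ∀ x : f.domain, (x : E) ∈ s → 0 ≤ f x)
    (dense : ∀ y, ∃ x : f.domain, (x : E) + y ∈ s) :
    ∃ g : E →ₗ[𝕜] W, (∀ x : f.domain, g x = f x) ∧ ∀ x ∈ s, 0 ≤ g x := by
  obtain ⟨⟨g_dom, g⟩, ⟨-, hfg⟩, rfl : g_dom = ⊤, hg_nonneg⟩ :=
    RieszExtension.exists_domain_eq_top s f nonneg dense
  exact ⟨g.comp (LinearMap.id.codRestrict ⊤ fun _ ↦ trivial), fun x => (hfg rfl).symm,
    fun x hx => hg_nonneg ⟨x, trivial⟩ hx⟩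

end

namespace OUS

variable {𝕜 V : Type*} [Field 𝕜] [LinearOrder 𝕜] [IsStrictOrderedRing 𝕜]
  [AddCommGroup V] [Module 𝕜 V]

def cone (O : OUS 𝕜 V) : PointedCone 𝕜 V where
  carrier := O.C
  add_mem' ha hb := O.add_mem ha hb
  zero_mem' := by simpa using O.smul_mem 0 le_rfl O.u_mem
  smul_mem' c _ hx := O.smul_mem c c.2 hx

theorem exists_add_mem_of_unit_mem (O : OUS 𝕜 V) {U : Submodule 𝕜 V} (hu : O.u ∈ U) (y : V) :
    ∃ x : U, (x : V) + y ∈ O.C :=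
  let ⟨l, hl⟩ := O.order_unit y
  ⟨⟨l • O.u, U.smul_mem l hu⟩, hl⟩

end OUS

set_option synthInstance.maxHeartbeats 1000000 in
/-- Hahn-Banach extension theorem for order unit spaces over an ordered subfield of `ℝ`. -/
theorem stmt1 (F : Subfield ℝ) {V : Type*} [AddCommGroup V] [Module F V]
    (O : OUS F V) (U : Submodule F V) (hu : O.u ∈ U)
    (σ : U →ₗ[F] ℝ) (hσpos : ∀ a : U, (a : V) ∈ O.C → 0 ≤ σ a)
    (hσu : σ ⟨O.u, hu⟩ = 1) :
    ∃ ρ : V →ₗ[F] ℝ, (∀ a ∈ O.C, 0 ≤ ρ a) ∧ ρ O.u = 1 ∧ ∀ a : U, ρ (a : V) = σ a := by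
  obtain ⟨ρ, hρσ, hρ_nonneg⟩ := riesz_extension_of_conditionallyCompleteLattice O.cone
    (⟨U, σ⟩ : V →ₗ.[F] ℝ) hσpos (O.exists_add_mem_of_unit_mem hu)
  exact ⟨ρ, hρ_nonneg, (hρσ ⟨O.u, hu⟩).trans hσu, hρσ⟩
end

section
/- The possibility measure on the triangle test space $(\{x,y,z\},\{\{x,y\},\{y,z\},\{z,x\}\})$ determined by $\Pl(\{x\}) = 0$, $\Pl(\{y\}) = 1$, $\Pl(\{z\}) = 1$ (with $\Pl(A) = 1$ iff $A$ contains $y$ or $z$) is not Archimedean: the families $(\{y,z\},\{x,z\},\{x\})$ and $(\{x,y\},\{x,z\},\{z\})$ witness its failure. -/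
open Finset

/-- A (locally finite) test space: a set of finite tests covering the outcome set. -/
structure TSpace (X : Type*) where
  tests : Set (Finset X)
  covers : ∀ x : X, ∃ T ∈ tests, x ∈ T

/-- An event is a subset of some test. -/
def TSpace.IsEvent {X : Type*} (S : TSpace X) (A : Finset X) : Prop :=
  ∃ T ∈ S.tests, A ⊆ T

/-- A probability measure on a test space. -/
def IsProbMeasure {X : Type*} (S : TSpace X) (μ : X → ℝ) : Prop :=
  (∀ x, 0 ≤ μ x) ∧ ∀ T ∈ S.tests, ∑ x ∈ T, μ x = 1

/-- Extension of a probability measure to events. -/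
def mval {X : Type*} (μ : X → ℝ) (A : Finset X) : ℝ := ∑ x ∈ A, μ x

/-- A plausibility measure on a test space, valued in a poset `D`. -/
structure PlausMeasure {X : Type*} (S : TSpace X) (D : Type*) [PartialOrder D] where
  Pl : Finset X → D
  eq_tests : ∀ T ∈ S.tests, ∀ R ∈ S.tests, Pl T = Pl R
  mono : ∀ A B : Finset X, S.IsEvent B → A ⊆ B → Pl A ≤ Pl B
  pos : ∀ T ∈ S.tests, Pl ∅ < Pl T

open scoped Classical in
/-- The Archimedean condition for a plausibility assignment. -/
def IsArch {X D : Type*} [PartialOrder D] (S : TSpace X) (Pl : Finset X → D) : Prop :=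
  ∀ (n : ℕ) (A B : Fin (n + 1) → Finset X),
    (∀ i, S.IsEvent (A i)) → (∀ i, S.IsEvent (B i)) →
    (∀ x : X, (univ.filter fun i => x ∈ A i).card = (univ.filter fun i => x ∈ B i).card) →
    (∀ i : Fin n, Pl (A i.castSucc) ≤ Pl (B i.castSucc)) →
    Pl (B (Fin.last n)) ≤ Pl (A (Fin.last n))


/-- The triangle test space on outcomes `{x, y, z} = {0, 1, 2}`. -/
def triangle : TSpace (Fin 3) where
  tests := {{0, 1}, {1, 2}, {2, 0}}
  covers := by
    intro x
    fin_cases x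
    · exact ⟨{0, 1}, by simp, by decide⟩
    · exact ⟨{0, 1}, by simp, by decide⟩
    · exact ⟨{1, 2}, by simp, by decide⟩

/-- The possibility measure with `Pl(x) = 0`, `Pl(y) = Pl(z) = 1` on the triangle test
space is not Archimedean, as witnessed by the families
`({y,z}, {x,z}, {x})` and `({x,y}, {x,z}, {z})`. -/
theorem stmt8 (Pl : Finset (Fin 3) → ℕ)
    (hPl : ∀ A, Pl A = if 1 ∈ A ∨ 2 ∈ A then 1 else 0)
    (A : Fin 3 → Finset (Fin 3)) (hA : A = ![{1, 2}, {0, 2}, {0}])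
    (B : Fin 3 → Finset (Fin 3)) (hB : B = ![{0, 1}, {0, 2}, {2}]) :
    (∀ x : Fin 3, (Finset.univ.filter fun i => x ∈ A i).card =
      (Finset.univ.filter fun i => x ∈ B i).card) ∧
    (∀ i : Fin 2, Pl (A i.castSucc) ≤ Pl (B i.castSucc)) ∧
    ¬ Pl (B (Fin.last 2)) ≤ Pl (A (Fin.last 2)) ∧
    ¬ IsArch triangle Pl := by
  subst hA hB
  have hcard : ∀ x : Fin 3, (Finset.univ.filter fun i =>
      x ∈ ![({1, 2} : Finset (Fin 3)), {0, 2}, {0}] i).card =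
      (Finset.univ.filter fun i => x ∈ ![({0, 1} : Finset (Fin 3)), {0, 2}, {2}] i).card := by
    decide
  refine ⟨hcard, ?_, ?_, ?_⟩
  · intro i
    fin_cases i <;> simp [hPl]
  · simp [hPl, Matrix.cons_val_fin_one, Fin.last]
  · intro h
    have hAev : ∀ i, triangle.IsEvent (![({1, 2} : Finset (Fin 3)), {0, 2}, {0}] i) := by
      intro i
      fin_cases i
      · exact ⟨{1, 2}, by simp [triangle], by decide⟩
      · exact ⟨{2, 0}, by simp [triangle], by decide⟩
      · exact ⟨{2, 0}, by simp [triangle], by decide⟩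
    have hBev : ∀ i, triangle.IsEvent (![({0, 1} : Finset (Fin 3)), {0, 2}, {2}] i) := by
      intro i
      fin_cases i
      · exact ⟨{0, 1}, by simp [triangle], by decide⟩
      · exact ⟨{2, 0}, by simp [triangle], by decide⟩
      · exact ⟨{2, 0}, by simp [triangle], by decide⟩
    have := h 2 ![{1, 2}, {0, 2}, {0}] ![{0, 1}, {0, 2}, {2}] hAev hBev
      (by intro x; convert hcard x using 2 <;> apply Finset.filter_congr_decidable) (by intro i; fin_cases i <;> simp [hPl])
    simp [hPl, Fin.last] at this
end

section
/- If a plausibility measure $\Pl$ on a test space agrees with some probability measure $\mu$, then $\Pl$ is Archimedean and the image of $\Pl$ is totally ordered. -/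
open Finset

/-- If a plausibility measure agrees with a probability measure, then it is Archimedean
and its image is totally ordered. -/
theorem stmt9 {X D : Type*} [PartialOrder D] (S : TSpace X) (P : PlausMeasure S D)
    (μ : X → ℝ) (hμ : IsProbMeasure S μ)
    (hagree : ∀ A B : Finset X, S.IsEvent A → S.IsEvent B →
      (P.Pl A ≤ P.Pl B ↔ mval μ A ≤ mval μ B)) :
    IsArch S P.Pl ∧
    ∀ A B : Finset X, S.IsEvent A → S.IsEvent B → P.Pl A ≤ P.Pl B ∨ P.Pl B ≤ P.Pl A := by
  constructor
  · intro n A B hA hB hcard hle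
    classical
    have key : ∀ (C : Fin (n+1) → Finset X) (U : Finset X), (∀ i, C i ⊆ U) →
        ∑ i, mval μ (C i) = ∑ x ∈ U, ((univ.filter fun i => x ∈ C i).card : ℝ) * μ x := by
      intro C U hU
      have h1 : ∀ i, mval μ (C i) = ∑ x ∈ U, if x ∈ C i then μ x else 0 := by
        intro i
        rw [mval, ← Finset.sum_filter]
        congr 1
        ext x
        simp only [Finset.mem_filter]
        exact ⟨fun hx => ⟨hU i hx, hx⟩, fun h => h.2⟩
      calc ∑ i, mval μ (C i) = ∑ i, ∑ x ∈ U, if x ∈ C i then μ x else 0 := by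
            simp_rw [h1]
        _ = ∑ x ∈ U, ∑ i, if x ∈ C i then μ x else 0 := Finset.sum_comm
        _ = ∑ x ∈ U, ((univ.filter fun i => x ∈ C i).card : ℝ) * μ x := by
            refine Finset.sum_congr rfl fun x _ => ?_
            rw [Finset.sum_ite, Finset.sum_const_zero, add_zero, Finset.sum_const, nsmul_eq_mul]
    set U := (univ.biUnion A) ∪ (univ.biUnion B) with hUdef
    have hAU : ∀ i, A i ⊆ U := fun i => (Finset.subset_biUnion_of_mem A (mem_univ i)).trans
      Finset.subset_union_left
    have hBU : ∀ i, B i ⊆ U := fun i => (Finset.subset_biUnion_of_mem B (mem_univ i)).trans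
      Finset.subset_union_right
    have hsum : ∑ i, mval μ (A i) = ∑ i, mval μ (B i) := by
      rw [key A U hAU, key B U hBU]
      exact Finset.sum_congr rfl fun x _ => by rw [hcard x]
    have hle' : ∀ i : Fin n, mval μ (A i.castSucc) ≤ mval μ (B i.castSucc) := fun i =>
      (hagree _ _ (hA _) (hB _)).1 (hle i)
    have hsplitA := Fin.sum_univ_castSucc (fun i => mval μ (A i))
    have hsplitB := Fin.sum_univ_castSucc (fun i => mval μ (B i))
    have hsum' : ∑ i : Fin n, mval μ (A i.castSucc) + mval μ (A (Fin.last n))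
        = ∑ i : Fin n, mval μ (B i.castSucc) + mval μ (B (Fin.last n)) := by
      rw [← hsplitA, ← hsplitB]; exact hsum
    have hfin : mval μ (B (Fin.last n)) ≤ mval μ (A (Fin.last n)) := by
      have := Finset.sum_le_sum (fun i (_ : i ∈ univ) => hle' i)
      linarith
    exact (hagree _ _ (hB _) (hA _)).2 hfin
  · intro A B hA hB
    rcases le_total (mval μ A) (mval μ B) with h | h
    · exact Or.inl ((hagree A B hA hB).2 h)
    · exact Or.inr ((hagree B A hB hA).2 h)
end

section
/- Let $\Pl$ be an Archimedean plausibility measure on a locally finite test space $(X,\Sigma)$, let $V$ be the $\mathbb{Q}$-vector space with basis $\{e_x\}_{x\in X}$, let $e_A = \sum_{x\in A} e_x$ for events $A$, and let $C$ be the convex cone generated by $\{e_A - e_B : \Pl(A) \succeq \Pl(B)\}$. Then for any fixed test $T$, the element $u = e_T$ satisfies: for every $a \in V$ there exists $\lambda \in \mathbb{Q}$ with $\lambda u + a \in C$. -/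
open Finset

/-- The convex cone generated by a set `S`: all finite nonnegative rational
linear combinations of elements of `S`. -/
def coneGen {V : Type*} [AddCommGroup V] [Module ℚ V] (S : Set V) : Set V :=
  {v | ∃ (n : ℕ) (c : Fin n → ℚ) (s : Fin n → V),
    (∀ i, 0 ≤ c i) ∧ (∀ i, s i ∈ S) ∧ v = ∑ i, c i • s i}

/-- The basis vector sum `e_A = ∑_{x ∈ A} e_x` in the free `ℚ`-vector space on `X`. -/
noncomputable def eVec {X : Type*} (A : Finset X) : X →₀ ℚ :=
  ∑ x ∈ A, Finsupp.single x 1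


section Cone

variable {V : Type*} [AddCommGroup V] [Module ℚ V] {S : Set V}

lemma zero_mem_coneGen : (0 : V) ∈ coneGen S :=
  ⟨0, ![], ![], fun i => i.elim0, fun i => i.elim0, by simp⟩

lemma smul_mem_coneGen {c : ℚ} (hc : 0 ≤ c) {s : V} (hs : s ∈ S) : c • s ∈ coneGen S :=
  ⟨1, ![c], ![s], fun i => by fin_cases i; simpa, fun i => by fin_cases i; simpa, by simp⟩

lemma add_mem_coneGen {v w : V} (hv : v ∈ coneGen S) (hw : w ∈ coneGen S) :
    v + w ∈ coneGen S := by
  obtain ⟨n, c, s, hc, hs, rfl⟩ := hv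
  obtain ⟨m, d, t, hd, ht, rfl⟩ := hw
  refine ⟨n + m, Fin.append c d, Fin.append s t, fun i => ?_, fun i => ?_,
    by simp [Fin.sum_univ_add]⟩
  · cases i using Fin.addCases <;> simp [hc, hd]
  · cases i using Fin.addCases <;> simp [hs, ht]

end Cone

/-- Coordinatewise: `c e_x` lies in the cone if `c ≥ 0`, and `-c u + c e_x = -c (u - e_x)` does
if `c < 0`. -/
lemma exists_smul_add_mem_coneGen {X : Type*} {S : Set (X →₀ ℚ)} {u : X →₀ ℚ}
    (hsingle : ∀ x, Finsupp.single x 1 ∈ S) (hsub : ∀ x, u - Finsupp.single x 1 ∈ S)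
    (a : X →₀ ℚ) : ∃ l : ℚ, l • u + a ∈ coneGen S := by
  induction a using Finsupp.induction with
  | zero => exact ⟨0, by simpa using zero_mem_coneGen⟩
  | single_add x c f _ _ ih =>
    obtain ⟨l, hl⟩ := ih
    have hc : Finsupp.single x c = c • Finsupp.single x 1 := by simp
    rcases le_or_gt 0 c with hnonneg | hneg
    · refine ⟨l, ?_⟩
      convert add_mem_coneGen (smul_mem_coneGen hnonneg (hsingle x)) hl using 1
      rw [hc]
      abel
    · refine ⟨l - c, ?_⟩
      convert add_mem_coneGen (smul_mem_coneGen (neg_nonneg.2 hneg.le) (hsub x)) hl using 1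
      rw [hc]
      module

lemma eVec_singleton {X : Type*} (x : X) : eVec {x} = Finsupp.single x 1 := by
  simp [eVec]

lemma eVec_empty {X : Type*} : eVec (∅ : Finset X) = 0 := by
  simp [eVec]

lemma TSpace.isEvent_singleton {X : Type*} (S : TSpace X) (x : X) : S.IsEvent {x} := by
  obtain ⟨T, hT, hxT⟩ := S.covers x
  exact ⟨T, hT, singleton_subset_iff.2 hxT⟩

namespace PlausMeasure

variable {X D : Type*} [PartialOrder D] {S : TSpace X}

def diffSet (P : PlausMeasure S D) : Set (X →₀ ℚ) :=
  {v | ∃ A B : Finset X, S.IsEvent A ∧ S.IsEvent B ∧ P.Pl B ≤ P.Pl A ∧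
    v = eVec A - eVec B}

lemma pl_le_of_isEvent (P : PlausMeasure S D) {A T : Finset X} (hA : S.IsEvent A)
    (hT : T ∈ S.tests) : P.Pl A ≤ P.Pl T := by
  obtain ⟨R, hR, hAR⟩ := hA
  calc P.Pl A ≤ P.Pl R := P.mono A R ⟨R, hR, subset_rfl⟩ hAR
    _ = P.Pl T := P.eq_tests R hR T hT

lemma single_mem_diffSet (P : PlausMeasure S D) (x : X) : Finsupp.single x 1 ∈ P.diffSet := by
  have hx : S.IsEvent {x} := S.isEvent_singleton x
  refine ⟨{x}, ∅, hx, ?_, P.mono ∅ {x} hx (empty_subset _),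
    by simp [eVec_singleton, eVec_empty]⟩
  obtain ⟨T, hT, -⟩ := hx
  exact ⟨T, hT, empty_subset _⟩

lemma sub_single_mem_diffSet (P : PlausMeasure S D) {T : Finset X} (hT : T ∈ S.tests) (x : X) :
    eVec T - Finsupp.single x 1 ∈ P.diffSet :=
  ⟨T, {x}, ⟨T, hT, subset_rfl⟩, S.isEvent_singleton x,
    P.pl_le_of_isEvent (S.isEvent_singleton x) hT, by rw [eVec_singleton]⟩

end PlausMeasure

theorem stmt10_general {X D : Type*} [PartialOrder D] (S : TSpace X) (P : PlausMeasure S D)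
    (T : Finset X) (hT : T ∈ S.tests) :
    ∀ a : X →₀ ℚ, ∃ l : ℚ,
      l • eVec T + a ∈ coneGen {v | ∃ A B : Finset X, S.IsEvent A ∧ S.IsEvent B ∧
        P.Pl B ≤ P.Pl A ∧ v = eVec A - eVec B} :=
  exists_smul_add_mem_coneGen P.single_mem_diffSet (P.sub_single_mem_diffSet hT)

/-- For an Archimedean plausibility measure, `u = e_T` is an order unit for the cone
generated by the differences `e_A - e_B` with `Pl(A) ⪰ Pl(B)`. -/
theorem stmt10 {X D : Type*} [PartialOrder D] (S : TSpace X) (P : PlausMeasure S D)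
    (hArch : IsArch S P.Pl) (T : Finset X) (hT : T ∈ S.tests) :
    ∀ a : X →₀ ℚ, ∃ l : ℚ,
      l • eVec T + a ∈ coneGen {v | ∃ A B : Finset X, S.IsEvent A ∧ S.IsEvent B ∧
        P.Pl B ≤ P.Pl A ∧ v = eVec A - eVec B} :=
  stmt10_general S P T hT
end

section
/- Let $\Pl$ be an Archimedean plausibility measure on a locally finite test space, $V$ the $\mathbb{Q}$-vector space with basis $X$, and $C$ the convex cone generated by $\{e_A - e_B : \Pl(A) \succeq \Pl(B)\}$. If $A$ and $B$ are events with $\Pl(A) \prec \Pl(B)$, then $e_A - e_B \notin C$. -/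
open Finset

/-! Clearing denominators, a relation `e_A - e_B = ∑ cᵢ (e_{A'ᵢ} - e_{B'ᵢ})` with
`Pl(B'ᵢ) ⪯ Pl(A'ᵢ)` becomes `N e_A + ∑ mᵢ e_{B'ᵢ} = N e_B + ∑ mᵢ e_{A'ᵢ}` with natural `N ≥ 1`
and `mᵢ`. Hence the families `(A, …, A, B'ᵢ, …, A)` and `(B, …, B, A'ᵢ, …, B)`, with `N - 1`
copies of `A` resp. `B` and `mᵢ` copies of `B'ᵢ` resp. `A'ᵢ`, cover every outcome equally often,
and their pairs before the last satisfy `Pl(A) ⪯ Pl(B)` and `Pl(B'ᵢ) ⪯ Pl(A'ᵢ)`. The Archimedean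
axiom then yields `Pl(B) ⪯ Pl(A)`, contradicting `Pl(A) ≺ Pl(B)`. -/

theorem eVec_apply {X : Type*} [DecidableEq X] (A : Finset X) (x : X) :
    eVec A x = if x ∈ A then 1 else 0 := by
  simp [eVec, Finsupp.finsetSum_apply, Finsupp.single_apply]

theorem sum_eVec_apply {X ι : Type*} [DecidableEq X] (s : Finset ι) (A : ι → Finset X) (x : X) :
    (∑ i ∈ s, eVec (A i)) x = #{i ∈ s | x ∈ A i} := by
  simp [Finsupp.finsetSum_apply, eVec_apply]

theorem exists_nat_mul_eq_natCast {ι : Type*} [Fintype ι] (c : ι → ℚ) (hc : ∀ i, 0 ≤ c i) :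
    ∃ N : ℕ, 0 < N ∧ ∃ m : ι → ℕ, ∀ i, (N : ℚ) * c i = m i := by
  classical
  lift c to ι → ℚ≥0 using hc
  refine ⟨∏ i, (c i).den, Finset.prod_pos fun i _ => (c i).den_pos,
    fun i => (c i).num * ∏ j ∈ univ.erase i, (c j).den, fun i => ?_⟩
  have hden : ((c i).den : ℚ) * c i = (c i).num := by
    exact_mod_cast (c i).den_mul_eq_num
  rw [← Finset.mul_prod_erase univ _ (mem_univ i)]
  push_cast
  linear_combination (∏ j ∈ univ.erase i, ((c j).den : ℚ)) * hden

theorem exists_nsmul_eq_sum_map_of_mem_coneGen {V ι : Type*} [AddCommGroup V] [Module ℚ V]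
    {T : Set V} {G : Set ι} {f : ι → V} (hT : T ⊆ f '' G) {v : V} (hv : v ∈ coneGen T) :
    ∃ N : ℕ, 0 < N ∧ ∃ M : Multiset ι, (∀ p ∈ M, p ∈ G) ∧ N • v = (M.map f).sum := by
  obtain ⟨n, c, s, hc, hs, rfl⟩ := hv
  choose p hpG hp using fun i => hT (hs i)
  obtain ⟨N, hN, m, hm⟩ := exists_nat_mul_eq_natCast c hc
  refine ⟨N, hN, ∑ i, m i • {p i}, ?_, ?_⟩
  · intro q hq
    simp only [Multiset.mem_sum, Multiset.mem_nsmul, Multiset.mem_singleton] at hq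
    obtain ⟨i, -, -, rfl⟩ := hq
    exact hpG i
  · have hmap : ((∑ i, m i • ({p i} : Multiset ι)).map f).sum = ∑ i, m i • f (p i) := by
      change Multiset.sumAddMonoidHom (Multiset.mapAddMonoidHom f _) = _
      simp only [map_sum, map_nsmul, Multiset.mapAddMonoidHom_apply, Multiset.map_singleton,
        Multiset.coe_sumAddMonoidHom, Multiset.sum_singleton]
    rw [hmap, Finset.smul_sum]
    refine Finset.sum_congr rfl fun i _ => ?_
    rw [hp, ← Nat.cast_smul_eq_nsmul ℚ, smul_smul, hm, Nat.cast_smul_eq_nsmul]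

section Archimedean

variable {X D : Type*} [PartialOrder D] {S : TSpace X} {Pl : Finset X → D}

theorem IsArch.le_of_sum_eVec_eq (hArch : IsArch S Pl) {n : ℕ} (A B : Fin (n + 1) → Finset X)
    (hA : ∀ i, S.IsEvent (A i)) (hB : ∀ i, S.IsEvent (B i))
    (hsum : ∑ i, eVec (A i) = ∑ i, eVec (B i))
    (hle : ∀ i : Fin n, Pl (A i.castSucc) ≤ Pl (B i.castSucc)) :
    Pl (B (Fin.last n)) ≤ Pl (A (Fin.last n)) := by
  classical
  refine hArch n A B hA hB (fun x => ?_) hle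
  have := congrArg (· x) hsum
  simp only [sum_eVec_apply, Nat.cast_inj] at this
  convert this

theorem IsArch.le_of_multiset (hArch : IsArch S Pl) (M : Multiset (Finset X × Finset X))
    {A B : Finset X} (hA : S.IsEvent A) (hB : S.IsEvent B)
    (hM : ∀ p ∈ M, S.IsEvent p.1 ∧ S.IsEvent p.2 ∧ Pl p.1 ≤ Pl p.2)
    (hsum : (M.map fun p => eVec p.1).sum + eVec A = (M.map fun p => eVec p.2).sum + eVec B) :
    Pl B ≤ Pl A := by
  set L := M.toList
  have hL : ∀ i : Fin L.length, S.IsEvent L[i].1 ∧ S.IsEvent L[i].2 ∧ Pl L[i].1 ≤ Pl L[i].2 :=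
    fun i => hM _ (Multiset.mem_toList.mp (List.getElem_mem _))
  have := hArch.le_of_sum_eVec_eq (Fin.snoc (fun i : Fin L.length => L[i].1) A)
    (Fin.snoc (fun i : Fin L.length => L[i].2) B)
    (Fin.lastCases (by simpa using hA) fun i => by simpa using (hL i).1)
    (Fin.lastCases (by simpa using hB) fun i => by simpa using (hL i).2.1)
    (by simpa [Fin.sum_univ_castSucc, Fin.sum_univ_fun_getElem L (fun p => eVec _),
      L, Multiset.sum_map_toList] using hsum)
    (fun i => by simpa using (hL i).2.2)
  simpa using this

end Archimedean

/-- For an Archimedean plausibility measure, `Pl(A) ≺ Pl(B)` implies that `e_A - e_B`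
is not in the cone generated by the differences `e_A' - e_B'` with `Pl(A') ⪰ Pl(B')`. -/
theorem stmt11 {X D : Type*} [PartialOrder D] (S : TSpace X) (P : PlausMeasure S D)
    (hArch : IsArch S P.Pl) (A B : Finset X) (hA : S.IsEvent A) (hB : S.IsEvent B)
    (hlt : P.Pl A < P.Pl B) :
    eVec A - eVec B ∉ coneGen {v | ∃ A' B' : Finset X, S.IsEvent A' ∧ S.IsEvent B' ∧
      P.Pl B' ≤ P.Pl A' ∧ v = eVec A' - eVec B'} := by
  intro hmem
  obtain ⟨N, hN, M, hMG, hMsum⟩ := exists_nsmul_eq_sum_map_of_mem_coneGen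
    (G := {p : Finset X × Finset X | S.IsEvent p.1 ∧ S.IsEvent p.2 ∧ P.Pl p.2 ≤ P.Pl p.1})
    (f := fun p : Finset X × Finset X => eVec p.1 - eVec p.2)
    (by rintro _ ⟨A', B', hA', hB', hle, rfl⟩; exact ⟨(A', B'), ⟨hA', hB', hle⟩, rfl⟩) hmem
  obtain ⟨k, rfl⟩ := Nat.exists_eq_add_one_of_ne_zero hN.ne'
  refine hlt.not_ge (hArch.le_of_multiset (Multiset.replicate k (A, B) + M.map Prod.swap) hA hB
    ?_ ?_)
  · simp only [Multiset.mem_add, Multiset.mem_replicate, Multiset.mem_map]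
    rintro _ (⟨-, rfl⟩ | ⟨p, hp, rfl⟩)
    · exact ⟨hA, hB, hlt.le⟩
    · obtain ⟨h1, h2, hle⟩ := hMG p hp
      exact ⟨h2, h1, hle⟩
  · rw [Multiset.sum_map_sub] at hMsum
    simp only [Multiset.map_add, Multiset.map_replicate, Multiset.sum_add, Multiset.sum_replicate,
      Multiset.map_map, Function.comp_def, Prod.fst_swap, Prod.snd_swap]
    linear_combination (norm := module) hMsum
end

section
/- Main theorem (finite case): a plausibility measure $\Pl$ on a test space $(X,\Sigma)$ with $X$ finite agrees with some probability measure $\mu$ (i.e., $\Pl(A)\preceq\Pl(B) \iff \mu(A)\leq\mu(B)$) if and only if the image of $\Pl$ is totally ordered and $\Pl$ is Archimedean. -/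
open Finset

/-!
Agreement with a measure makes `Pl` total, and additivity of `μ` turns a family of comparisons
in which every outcome occurs equally often on both sides into equal sums, whence the Archimedean
property. Conversely, look for `q : X → ℚ` and `ε > 0` with `q(A) ≤ q(B)` whenever
`Pl A ≤ Pl B` and `q(A) + ε ≤ q(B)` whenever `Pl A < Pl B`. By Farkas' lemma over `ℚ`, either
such `(q, ε)` exists, and then `q` normalized by the common value `q(T)` of the tests is the
required measure (totality gives the converse implication), or a nonnegative rational
combination of the constraints, involving some strict one, cancels on every outcome. Clearing
denominators turns it into a balanced family of comparisons, with repetitions, whose last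
comparison is strict: this contradicts the Archimedean property.
-/

theorem exists_nonneg_sum_insert_eq {R M κ : Type*} [Semiring R] [PartialOrder R]
    [AddCommMonoid M] [Module R M] [DecidableEq κ] (v : κ → M) {a : κ} {s : Finset κ}
    (ha : a ∉ s) {f : κ → R} (hf : ∀ k ∈ s, 0 ≤ f k) {β : R} (hβ : 0 ≤ β) :
    ∃ g : κ → R, (∀ k ∈ insert a s, 0 ≤ g k) ∧
      ∑ k ∈ insert a s, g k • v k = β • v a + ∑ k ∈ s, f k • v k := by
  have hupdate : ∀ k ∈ s, Function.update f a β k = f k := fun k hk =>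
    Function.update_of_ne (ne_of_mem_of_not_mem hk ha) _ _
  refine ⟨Function.update f a β, forall_mem_insert _ _ _ |>.mpr ⟨by rwa [Function.update_self],
    fun k hk => hupdate k hk ▸ hf k hk⟩, ?_⟩
  rw [sum_insert ha, Function.update_self, sum_congr rfl fun k hk => by rw [hupdate k hk]]

theorem farkas {𝕜 ι κ : Type*} [Field 𝕜] [LinearOrder 𝕜] [IsStrictOrderedRing 𝕜] [Fintype ι]
    (s : Finset κ) (v : κ → ι → 𝕜) (c : ι → 𝕜) :
    (∃ f : κ → 𝕜, (∀ k ∈ s, 0 ≤ f k) ∧ ∑ k ∈ s, f k • v k = c) ∨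
      ∃ y : ι → 𝕜, (∀ k ∈ s, 0 ≤ y ⬝ᵥ v k) ∧ y ⬝ᵥ c < 0 := by
  classical
  induction s using Finset.induction_on generalizing v c with
  | empty =>
    by_cases hc : c = 0
    · exact .inl ⟨0, by simp, by simp [hc]⟩
    · refine .inr ⟨-c, by simp, ?_⟩
      rw [neg_dotProduct, neg_neg_iff_pos]
      exact (Fintype.sum_nonneg fun i => mul_self_nonneg (c i)).lt_of_ne'
        (dotProduct_self_eq_zero.not.mpr hc)
  | insert a s ha ih =>
    obtain ⟨f, hf, hfc⟩ | ⟨y, hy, hyc⟩ := ih v c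
    · obtain ⟨g, hg, hgv⟩ := exists_nonneg_sum_insert_eq v ha hf le_rfl
      exact .inl ⟨g, hg, by rw [hgv, zero_smul, zero_add, hfc]⟩
    by_cases hya : 0 ≤ y ⬝ᵥ v a
    · exact .inr ⟨y, forall_mem_insert _ _ _ |>.mpr ⟨hya, hy⟩, hyc⟩
    replace hya := not_le.mp hya
    -- Project along `v a` onto the hyperplane `y ⬝ᵥ · = 0` and recurse on the remaining vectors.
    set t : (ι → 𝕜) → ι → 𝕜 := fun w => w - (y ⬝ᵥ w / y ⬝ᵥ v a) • v a
    obtain ⟨f, hf, hfc⟩ | ⟨z, hz, hzc⟩ := ih (t ∘ v) (t c)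
    · set β := y ⬝ᵥ c / y ⬝ᵥ v a - ∑ k ∈ s, f k * (y ⬝ᵥ v k / y ⬝ᵥ v a)
      have hβ : 0 ≤ β := by
        have hc : 0 < y ⬝ᵥ c / y ⬝ᵥ v a := div_pos_of_neg_of_neg hyc hya
        have hs : ∑ k ∈ s, f k * (y ⬝ᵥ v k / y ⬝ᵥ v a) ≤ 0 := sum_nonpos fun k hk =>
          mul_nonpos_of_nonneg_of_nonpos (hf k hk) (div_nonpos_of_nonneg_of_nonpos (hy k hk) hya.le)
        linarith
      obtain ⟨g, hg, hgv⟩ := exists_nonneg_sum_insert_eq v ha hf hβ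
      refine .inl ⟨g, hg, ?_⟩
      simp only [t, Function.comp_apply, smul_sub, smul_smul, sum_sub_distrib, ← sum_smul]
        at hfc
      rw [hgv]
      linear_combination (norm := module) hfc
    · have hproj : ∀ u, (z - (z ⬝ᵥ v a / y ⬝ᵥ v a) • y) ⬝ᵥ u = z ⬝ᵥ t u := fun u => by
        simp only [t, sub_dotProduct, dotProduct_sub, smul_dotProduct, dotProduct_smul,
          smul_eq_mul]
        ring
      refine .inr ⟨_, forall_mem_insert _ _ _ |>.mpr ⟨?_, fun k hk => ?_⟩, by rw [hproj]; exact hzc⟩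
      · simp only [hproj, t, div_self hya.ne, one_smul, sub_self, dotProduct_zero, le_refl]
      · rw [hproj]; exact hz k hk

theorem exists_natCast_eq_mul {κ : Type*} [Fintype κ] (f : κ → ℚ) (hf : ∀ k, 0 ≤ f k) :
    ∃ N : ℕ, 0 < N ∧ ∃ m : κ → ℕ, ∀ k, (m k : ℚ) = N * f k := by
  refine ⟨∏ k, (f k).den, prod_pos fun k _ => (f k).den_pos,
    fun k => (∏ k, (f k).den) / (f k).den * (f k).num.toNat, fun k => ?_⟩
  have hdvd : (f k).den ∣ ∏ k, (f k).den := dvd_prod_of_mem _ (mem_univ k)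
  have hnum : ((f k).num.toNat : ℚ) = (f k).num := by
    exact_mod_cast Int.toNat_of_nonneg (Rat.num_nonneg.mpr (hf k))
  rw [Nat.cast_mul, Nat.cast_div hdvd (by exact_mod_cast (f k).den_nz), hnum,
    div_mul_eq_mul_div, mul_div_assoc, Rat.num_div_den]

section Archimedean

variable {X D : Type*} [PartialOrder D] {S : TSpace X} {Pl : Finset X → D}

open scoped Classical in
theorem IsArch.snd_le_fst_of_card_eq (h : IsArch S Pl) {ι : Type*} [Fintype ι]
    {A B : ι → Finset X} (hA : ∀ i, S.IsEvent (A i)) (hB : ∀ i, S.IsEvent (B i))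
    (hcard : ∀ x, #{i | x ∈ A i} = #{i | x ∈ B i}) (j : ι)
    (hle : ∀ i ≠ j, Pl (A i) ≤ Pl (B i)) : Pl (B j) ≤ Pl (A j) := by
  obtain ⟨n, hn⟩ := Nat.exists_eq_succ_of_ne_zero (Fintype.card_pos_iff.mpr ⟨j⟩).ne'
  let e₀ := Fintype.equivFinOfCardEq hn
  let e : ι ≃ Fin (n + 1) := e₀.trans (Equiv.swap (e₀ j) (Fin.last n))
  have hej : e.symm (Fin.last n) = j := by simp [e]
  have hcard' : ∀ (C : ι → Finset X) x, #{i | x ∈ C (e.symm i)} = #{i | x ∈ C i} := fun C x =>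
    card_equiv e.symm fun i => by simp
  have := h n (A ∘ e.symm) (B ∘ e.symm) (fun _ => hA _) (fun _ => hB _)
    (fun x => by simp only [Function.comp_apply, hcard', hcard])
    (fun i => hle _ (by rw [← hej]; simp [Fin.castSucc_ne_last]))
  simpa [hej] using this

open scoped Classical in
theorem IsArch.snd_le_fst_of_sum_eq (h : IsArch S Pl) {κ : Type*} [Fintype κ] (m : κ → ℕ)
    {A B : κ → Finset X} (hA : ∀ k, S.IsEvent (A k)) (hB : ∀ k, S.IsEvent (B k))
    (hle : ∀ k, Pl (A k) ≤ Pl (B k))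
    (hsum : ∀ x, ∑ k with x ∈ A k, m k = ∑ k with x ∈ B k, m k) {k : κ} (hk : m k ≠ 0) :
    Pl (B k) ≤ Pl (A k) := by
  have hcard (C : κ → Finset X) (x : X) :
      #{i : Σ k, Fin (m k) | x ∈ C i.1} = ∑ k with x ∈ C k, m k := by
    rw [card_filter, Fintype.sum_sigma, sum_filter]
    simp [apply_ite card]
  exact h.snd_le_fst_of_card_eq (A := fun i : Σ k, Fin (m k) => A i.1) (B := fun i => B i.1)
    (fun _ => hA _) (fun _ => hB _) (fun x => by rw [hcard, hcard, hsum])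
    ⟨k, ⟨0, Nat.pos_of_ne_zero hk⟩⟩ fun i _ => hle i.1

end Archimedean

namespace TSpace

variable {X : Type*} (S : TSpace X)

theorem isEvent_of_mem {T : Finset X} (hT : T ∈ S.tests) : S.IsEvent T := ⟨T, hT, subset_rfl⟩

theorem isEvent_singleton_s13 (x : X) : S.IsEvent {x} :=
  let ⟨T, hT, hx⟩ := S.covers x
  ⟨T, hT, singleton_subset_iff.mpr hx⟩

theorem IsEvent.of_subset {A B : Finset X} (hB : S.IsEvent B) (hAB : A ⊆ B) : S.IsEvent A :=
  let ⟨T, hT, hBT⟩ := hB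
  ⟨T, hT, hAB.trans hBT⟩

end TSpace

section Agreement

variable {X D : Type*} [PartialOrder D] {S : TSpace X} {Pl : Finset X → D} {μ : X → ℝ}

def AgreesWith (S : TSpace X) (Pl : Finset X → D) (μ : X → ℝ) : Prop :=
  ∀ A B : Finset X, S.IsEvent A → S.IsEvent B → (Pl A ≤ Pl B ↔ mval μ A ≤ mval μ B)

theorem AgreesWith.le_total (h : AgreesWith S Pl μ) {A B : Finset X} (hA : S.IsEvent A)
    (hB : S.IsEvent B) : Pl A ≤ Pl B ∨ Pl B ≤ Pl A :=
  (_root_.le_total (mval μ A) (mval μ B)).imp (h A B hA hB).mpr (h B A hB hA).mpr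

open scoped Classical in
theorem sum_mval_eq_sum_card_mul [Fintype X] {ι : Type*} [Fintype ι] (A : ι → Finset X) :
    ∑ i, mval μ (A i) = ∑ x, #{i | x ∈ A i} * μ x := by
  calc ∑ i, mval μ (A i) = ∑ i, ∑ x, if x ∈ A i then μ x else 0 := by simp [mval]
    _ = _ := by rw [sum_comm]; simp [← sum_filter]

theorem AgreesWith.isArch [Fintype X] (h : AgreesWith S Pl μ) : IsArch S Pl := by
  classical
  intro n A B hA hB hcard hle
  rw [h _ _ (hB _) (hA _)]
  have hsum : ∑ i, mval μ (A i) = ∑ i, mval μ (B i) := by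
    simp only [sum_mval_eq_sum_card_mul, hcard]
  have hinit : ∑ i : Fin n, mval μ (A i.castSucc) ≤ ∑ i : Fin n, mval μ (B i.castSucc) :=
    sum_le_sum fun i _ => (h _ _ (hA _) (hB _)).mp (hle i)
  rw [Fin.sum_univ_castSucc, Fin.sum_univ_castSucc] at hsum
  linarith

end Agreement

namespace PlausMeasure

variable {X D : Type*} [PartialOrder D] {S : TSpace X} (P : PlausMeasure S D)

theorem exists_agreesWith_of_strictMono
    (htot : ∀ A B, S.IsEvent A → S.IsEvent B → P.Pl A ≤ P.Pl B ∨ P.Pl B ≤ P.Pl A) (q : X → ℝ)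
    (hle : ∀ A B, S.IsEvent A → S.IsEvent B → P.Pl A ≤ P.Pl B → mval q A ≤ mval q B)
    (hlt : ∀ A B, S.IsEvent A → S.IsEvent B → P.Pl A < P.Pl B → mval q A < mval q B) :
    ∃ μ, IsProbMeasure S μ ∧ AgreesWith S P.Pl μ := by
  by_cases hS : S.tests.Nonempty
  swap
  · refine ⟨0, ⟨fun _ => le_rfl, fun T hT => (hS ⟨T, hT⟩).elim⟩, fun A _ hA _ => ?_⟩
    obtain ⟨T, hT, -⟩ := hA
    exact (hS ⟨T, hT⟩).elim
  obtain ⟨T₀, hT₀⟩ := hS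
  have hT₀event := S.isEvent_of_mem hT₀
  have hempty : S.IsEvent ∅ := hT₀event.of_subset S (empty_subset _)
  have hpos : 0 < mval q T₀ := by
    simpa [mval] using hlt ∅ T₀ hempty hT₀event (P.pos T₀ hT₀)
  have hmval (A : Finset X) : mval (fun x => q x / mval q T₀) A = mval q A / mval q T₀ :=
    (sum_div ..).symm
  refine ⟨fun x => q x / mval q T₀, ⟨fun x => div_nonneg ?_ hpos.le, fun T hT => ?_⟩,
    fun A B hA hB => ?_⟩
  · simpa [mval] using
      hle ∅ {x} hempty (S.isEvent_singleton_s13 x) (P.mono _ _ (S.isEvent_singleton_s13 x) (empty_subset _))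
  · have hTT₀ := P.eq_tests T hT T₀ hT₀
    have := hle T T₀ (S.isEvent_of_mem hT) hT₀event hTT₀.le
    have := hle T₀ T hT₀event (S.isEvent_of_mem hT) hTT₀.ge
    rw [← mval, hmval, div_eq_one_iff_eq hpos.ne']
    linarith
  · rw [hmval, hmval, div_le_div_iff_of_pos_right hpos]
    refine ⟨hle A B hA hB, fun hq => ?_⟩
    by_contra hAB
    have hBA : P.Pl B < P.Pl A := lt_of_le_not_ge ((htot A B hA hB).resolve_left hAB) hAB
    exact (hlt B A hB hA hBA).not_ge hq

variable [Fintype X]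

def Comparison : Type _ :=
  {p : Finset X × Finset X // S.IsEvent p.1 ∧ S.IsEvent p.2 ∧ P.Pl p.1 ≤ P.Pl p.2}

noncomputable instance : Fintype P.Comparison := by
  classical
  unfold Comparison
  infer_instance

open scoped Classical in
/-- Coordinate `none` carries a slack `ε`: for `y = (ε, q)`, the inequality
`0 ≤ y ⬝ᵥ P.constraintVec (A, B)` reads `q(A) + ε ≤ q(B)` if `Pl A < Pl B`, else `q(A) ≤ q(B)`. -/
noncomputable def constraintVec (p : Finset X × Finset X) : Option X → ℚ
  | none => if P.Pl p.1 < P.Pl p.2 then -1 else 0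
  | some x => (if x ∈ p.2 then 1 else 0) - (if x ∈ p.1 then 1 else 0)

open scoped Classical in
theorem dotProduct_constraintVec (y : Option X → ℚ) (A B : Finset X) :
    y ⬝ᵥ P.constraintVec (A, B) =
      ∑ x ∈ B, y (some x) - ∑ x ∈ A, y (some x) - if P.Pl A < P.Pl B then y none else 0 := by
  simp only [dotProduct, constraintVec, Fintype.sum_option, mul_ite, mul_neg, mul_one, mul_zero,
    mul_sub, sum_sub_distrib, sum_ite_mem, univ_inter]
  split_ifs <;> ring

open scoped Classical in
theorem sum_smul_constraintVec_ne (harch : IsArch S P.Pl) (f : P.Comparison → ℚ)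
    (hf : ∀ k, 0 ≤ f k) : ∑ k, f k • P.constraintVec k.1 ≠ -Pi.single none 1 := by
  intro h
  obtain ⟨N, hN, m, hm⟩ := exists_natCast_eq_mul f hf
  have hmv : ∑ k, (m k : ℚ) • P.constraintVec k.1 = -(N : ℚ) • Pi.single none 1 := by
    simp_rw [hm, mul_smul, ← smul_sum, h, smul_neg, neg_smul]
  have hstrict : ∑ k with P.Pl k.1.1 < P.Pl k.1.2, m k = N := by
    have := congrFun hmv none
    simp only [Finset.sum_apply, Pi.smul_apply, constraintVec, smul_eq_mul, mul_ite, mul_neg,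
      mul_one, mul_zero, Pi.single_eq_same] at this
    rw [← sum_filter, sum_neg_distrib, neg_inj] at this
    exact_mod_cast this
  have hbal : ∀ x, ∑ k with x ∈ k.1.1, m k = ∑ k with x ∈ k.1.2, m k := by
    intro x
    have := congrFun hmv (some x)
    simp only [Finset.sum_apply, Pi.smul_apply, constraintVec, smul_eq_mul, mul_sub, mul_ite,
      mul_one, mul_zero, sum_sub_distrib, ← sum_filter, ne_eq, reduceCtorEq, not_false_eq_true,
      Pi.single_eq_of_ne] at this
    exact_mod_cast (sub_eq_zero.mp this).symm
  obtain ⟨k, hk, hmk⟩ := exists_ne_zero_of_sum_ne_zero (hstrict ▸ hN.ne')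
  exact (mem_filter.mp hk).2.not_ge <| harch.snd_le_fst_of_sum_eq m (fun k => k.2.1)
    (fun k => k.2.2.1) (fun k => k.2.2.2) hbal hmk

theorem exists_agreesWith_of_isArch
    (htot : ∀ A B, S.IsEvent A → S.IsEvent B → P.Pl A ≤ P.Pl B ∨ P.Pl B ≤ P.Pl A)
    (harch : IsArch S P.Pl) : ∃ μ, IsProbMeasure S μ ∧ AgreesWith S P.Pl μ := by
  classical
  obtain ⟨f, hf, hfc⟩ | ⟨y, hy, hyc⟩ :=
    farkas univ (fun k : P.Comparison => P.constraintVec k.1) (-Pi.single none 1)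
  · exact (P.sum_smul_constraintVec_ne harch f (fun k => hf k (mem_univ k)) hfc).elim
  have hε : 0 < y none := by simpa using hyc
  have hrep {A B : Finset X} (hA : S.IsEvent A) (hB : S.IsEvent B) (hAB : P.Pl A ≤ P.Pl B) :
      ∑ x ∈ A, y (some x) + (if P.Pl A < P.Pl B then y none else 0) ≤ ∑ x ∈ B, y (some x) := by
    have := hy ⟨(A, B), hA, hB, hAB⟩ (mem_univ _)
    rw [dotProduct_constraintVec] at this
    linarith
  refine P.exists_agreesWith_of_strictMono htot (fun x => y (some x))
    (fun A B hA hB hAB => ?_) (fun A B hA hB hAB => ?_) <;>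
  simp only [mval, ← Rat.cast_sum, Rat.cast_le, Rat.cast_lt]
  · have := hrep hA hB hAB
    split_ifs at this <;> linarith
  · have := hrep hA hB hAB.le
    rw [if_pos hAB] at this
    linarith

end PlausMeasure

/-- Main theorem, finite case: a plausibility measure on a finite test space agrees with
some probability measure iff its image is totally ordered and it is Archimedean. -/
theorem stmt13 {X D : Type*} [Fintype X] [PartialOrder D] (S : TSpace X)
    (P : PlausMeasure S D) :
    (∃ μ : X → ℝ, IsProbMeasure S μ ∧
      ∀ A B : Finset X, S.IsEvent A → S.IsEvent B →
        (P.Pl A ≤ P.Pl B ↔ mval μ A ≤ mval μ B)) ↔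
    ((∀ A B : Finset X, S.IsEvent A → S.IsEvent B →
        P.Pl A ≤ P.Pl B ∨ P.Pl B ≤ P.Pl A) ∧ IsArch S P.Pl) := by
  constructor
  · rintro ⟨μ, -, hagree⟩
    exact ⟨fun _ _ => AgreesWith.le_total hagree, AgreesWith.isArch hagree⟩
  · rintro ⟨htot, harch⟩
    exact P.exists_agreesWith_of_isArch htot harch
end
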